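/- Let X be a set with a transitive relation < and let ≤ denote its reflexive closure (x ≤ y iff x = y or x < y). If Conditions 1, 2, 3 and 4 all hold (Condition 1: for all x, y with ¬(x ≤ y), there exist finitely many z₁, …, zₙ such that y < zᵢ for every i and for every w, if w < zᵢ for every i then ¬(x ≤ w); Condition 2: for all x, y with ¬(y ≤ x), there exist finitely many z₁, …, zₙ such that zᵢ < y for every i and for every w, if zᵢ < w for every i then ¬(w ≤ x); Condition 3: for all x, y with y < x, there exist finitely many z₁, …, zₙ such that ¬(zᵢ ≤ y) for every i and for every w, if ¬(zᵢ ≤ w) for every i then w < x; Condition 4: for all x, y with x < y, there exist finitely many z₁, …, zₙ such that ¬(y ≤ zᵢ) for every i and for every w, if ¬(w ≤ zᵢ) for every i then x < w), then the interval topology 𝒯_in^≤ of ≤ equals the order topology 𝒯_< of <. -/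
import Mathlib


/-- The interval topology of a relation `le`: generated by the complements of the
up-sets `↑a = {y | le a y}` and of the down-sets `↓a = {y | le y a}`. -/
def intervalTopologyOf {X : Type*} (le : X → X → Prop) : TopologicalSpace X :=
  TopologicalSpace.generateFrom
    ({S | ∃ a, S = {y | le y a}ᶜ} ∪ {S | ∃ a, S = {y | le a y}ᶜ})

/-- The order topology of a relation `lt`: generated by the rays
`(←, a) = {x | lt x a}` and `(a, →) = {x | lt a x}`. -/
def orderTopologyOf {X : Type*} (lt : X → X → Prop) : TopologicalSpace X :=
  TopologicalSpace.generateFrom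
    ({S | ∃ a, S = {x | lt x a}} ∪ {S | ∃ a, S = {x | lt a x}})

/-- Condition 1. -/
def Cond1 {X : Type*} (lt le : X → X → Prop) : Prop :=
  ∀ x y : X, ¬ le x y →
    ∃ (n : ℕ) (z : Fin n → X), (∀ i, lt y (z i)) ∧
      ∀ w : X, (∀ i, lt w (z i)) → ¬ le x w

/-- Condition 2. -/
def Cond2 {X : Type*} (lt le : X → X → Prop) : Prop :=
  ∀ x y : X, ¬ le y x →
    ∃ (n : ℕ) (z : Fin n → X), (∀ i, lt (z i) y) ∧
      ∀ w : X, (∀ i, lt (z i) w) → ¬ le w x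

/-- Condition 3. -/
def Cond3 {X : Type*} (lt le : X → X → Prop) : Prop :=
  ∀ x y : X, lt y x →
    ∃ (n : ℕ) (z : Fin n → X), (∀ i, ¬ le (z i) y) ∧
      ∀ w : X, (∀ i, ¬ le (z i) w) → lt w x

/-- Condition 4. -/
def Cond4 {X : Type*} (lt le : X → X → Prop) : Prop :=
  ∀ x y : X, lt x y →
    ∃ (n : ℕ) (z : Fin n → X), (∀ i, ¬ le y (z i)) ∧
      ∀ w : X, (∀ i, ¬ le w (z i)) → lt x w

theorem intervalTop_eq_orderTop_of_conditions {X : Type*} (lt : X → X → Prop)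
    (htrans : ∀ x y z : X, lt x y → lt y z → lt x z)
    (le : X → X → Prop) (hle : ∀ x y : X, le x y ↔ x = y ∨ lt x y)
    (h1 : Cond1 lt le) (h2 : Cond2 lt le) (h3 : Cond3 lt le) (h4 : Cond4 lt le) :
    intervalTopologyOf le = orderTopologyOf lt := by

  apply le_antisymm
  · -- rays are open in the interval topology
    rw [orderTopologyOf, TopologicalSpace.le_generateFrom_iff_subset_isOpen]
    letI := intervalTopologyOf le
    rintro S (⟨a, rfl⟩ | ⟨a, rfl⟩)
    · rw [Set.mem_setOf_eq, isOpen_iff_forall_mem_open]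
      intro y hy
      obtain ⟨n, z, hz1, hz2⟩ := h3 a y hy
      refine ⟨⋂ i, {w | le (z i) w}ᶜ, fun w hw => hz2 w fun i => Set.mem_iInter.1 hw i, ?_, ?_⟩
      · exact isOpen_iInter_of_finite fun i =>
          TopologicalSpace.GenerateOpen.basic _ (Or.inr ⟨z i, rfl⟩)
      · exact Set.mem_iInter.2 hz1
    · rw [Set.mem_setOf_eq, isOpen_iff_forall_mem_open]
      intro y hy
      obtain ⟨n, z, hz1, hz2⟩ := h4 a y hy
      refine ⟨⋂ i, {w | le w (z i)}ᶜ, fun w hw => hz2 w fun i => Set.mem_iInter.1 hw i, ?_, ?_⟩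
      · exact isOpen_iInter_of_finite fun i =>
          TopologicalSpace.GenerateOpen.basic _ (Or.inl ⟨z i, rfl⟩)
      · exact Set.mem_iInter.2 hz1
  · -- interval subbasic sets are open in the order topology
    rw [intervalTopologyOf, TopologicalSpace.le_generateFrom_iff_subset_isOpen]
    letI := orderTopologyOf lt
    rintro S (⟨a, rfl⟩ | ⟨a, rfl⟩)
    · rw [Set.mem_setOf_eq, isOpen_iff_forall_mem_open]
      intro y hy
      obtain ⟨n, z, hz1, hz2⟩ := h2 a y hy
      refine ⟨⋂ i, {w | lt (z i) w}, fun w hw => hz2 w fun i => Set.mem_iInter.1 hw i, ?_, ?_⟩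
      · exact isOpen_iInter_of_finite fun i =>
          TopologicalSpace.GenerateOpen.basic _ (Or.inr ⟨z i, rfl⟩)
      · exact Set.mem_iInter.2 hz1
    · rw [Set.mem_setOf_eq, isOpen_iff_forall_mem_open]
      intro y hy
      obtain ⟨n, z, hz1, hz2⟩ := h1 a y hy
      refine ⟨⋂ i, {w | lt w (z i)}, fun w hw => hz2 w fun i => Set.mem_iInter.1 hw i, ?_, ?_⟩
      · exact isOpen_iInter_of_finite fun i =>
          TopologicalSpace.GenerateOpen.basic _ (Or.inl ⟨z i, rfl⟩)
      · exact Set.mem_iInter.2 hz1
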